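/- arXiv:1106.3874 — 6 statements merged into one kernel-verified Lean document; each statement's English description precedes it below -/
import Mathlib

section
/- If X and Y are n-tuples of nonempty subsets of N such that every unordered section of X is an unordered section of Y (i.e. X ⊑ Y), then for every index j in {1,…,n} there exists an index i such that X_i ⊆ Y_j. -/
open scoped Classical

/-- Characteristic vector of `a` along the tuple `Z`. -/
noncomputable def chi {N : Type*} {n : ℕ} (Z : Fin n → Set N) (a : N) : Fin n → Bool :=
  fun i => decide (a ∈ Z i)

/-- Weight: number of `true` coordinates. -/
def wt {n : ℕ} (u : Fin n → Bool) : ℕ :=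
  (Finset.univ.filter fun i => u i = true).card

/-- The set of unordered sections of the tuple `X`. -/
def Sec {N : Type*} {n : ℕ} (X : Fin n → Set N) : Set (Multiset N) :=
  { m | ∃ a : Fin n → N, ∃ σ : Equiv.Perm (Fin n),
      (∀ i, a i ∈ X (σ i)) ∧ m = (List.ofFn a : Multiset N) }

/-- Lift of a boolean function to tuples of sets. -/
noncomputable def liftFn {N : Type*} {n m : ℕ}
    (f : (Fin n → Bool) → (Fin m → Bool)) (Y : Fin n → Set N) : Fin m → Set N :=
  fun i => { a | f (chi Y a) i = true }

theorem ofFn_mem_Sec {N : Type*} {n : ℕ} {X : Fin n → Set N} {a : Fin n → N}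
    (ha : ∀ i, a i ∈ X i) : (List.ofFn a : Multiset N) ∈ Sec X :=
  ⟨a, 1, ha, rfl⟩

theorem exists_mem_of_mem_Sec {N : Type*} {n : ℕ} {Y : Fin n → Set N} {m : Multiset N}
    (hm : m ∈ Sec Y) (j : Fin n) : ∃ b ∈ m, b ∈ Y j := by
  obtain ⟨b, σ, hb, rfl⟩ := hm
  exact ⟨b (σ.symm j), by simp [List.mem_ofFn], by simpa using hb (σ.symm j)⟩

theorem stmt0_general {N : Type*} {n : ℕ} (X Y : Fin n → Set N)
    (h : Sec X ⊆ Sec Y) :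
    ∀ j : Fin n, ∃ i : Fin n, X i ⊆ Y j := by
  intro j
  by_contra! hc
  choose a ha hna using fun i => Set.not_subset.mp (hc i)
  obtain ⟨b, hb, hbj⟩ := exists_mem_of_mem_Sec (h (ofFn_mem_Sec ha)) j
  obtain ⟨i, rfl⟩ := List.mem_ofFn.mp (Multiset.mem_coe.mp hb)
  exact hna i hbj

theorem stmt0 {N : Type*} {n : ℕ} (X Y : Fin n → Set N)
    (hX : ∀ i, (X i).Nonempty) (hY : ∀ i, (Y i).Nonempty)
    (h : Sec X ⊆ Sec Y) :
    ∀ j : Fin n, ∃ i : Fin n, X i ⊆ Y j :=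
  stmt0_general X Y h
end

section
/- For any n-tuple X = (X_1,…,X_n) of nonempty subsets of N, the 'division' of Sec(X) by X_1 equals Sec(X_2,…,X_n); that is, a multiset (a_2,…,a_n) of size n−1 satisfies: for all a ∈ X_1 the multiset (a,a_2,…,a_n) is an unordered section of X — if and only if (a_2,…,a_n) is an unordered section of (X_2,…,X_n). -/
open scoped Classical

/-!
By Hall's theorem, `m` is a section of `X` iff `card m = k` and, for every set `s` of indices,
at least `#s` elements of `m` (with multiplicity) lie in `⋃ i ∈ s, X i`. If Hall's condition
failed for `m` and `(X 1, …, X n)` at some `s` with union `U`, then Hall's condition for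
`a ::ₘ m` at `s` would force every `a ∈ X 0` into `U`; so for `a₀ ∈ X 0` the indices
`{0} ∪ (s + 1)` still have union `U`, and Hall's condition for `a₀ ::ₘ m` there asks for
`#s + 1` elements of `a₀ ::ₘ m` in `U`, one more than it has.
-/

open Finset

section

variable {N : Type*} {k : ℕ}

lemma Multiset.exists_coe_ofFn_eq (m : Multiset N) (hm : Multiset.card m = k) :
    ∃ g : Fin k → N, (List.ofFn g : Multiset N) = m := by
  induction m using Quotient.inductionOn with
  | h l =>
    subst hm
    exact ⟨l.get, congrArg _ (List.ofFn_get l)⟩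

lemma Multiset.countP_coe_ofFn (p : N → Prop) [DecidablePred p] (b : Fin k → N) :
    Multiset.countP p (List.ofFn b : Multiset N) = #{i | p (b i)} := by
  rw [← Fin.univ_val_map, Multiset.countP_map]
  rfl

lemma mem_Sec_iff (X : Fin k → Set N) (m : Multiset N) :
    m ∈ Sec X ↔ ∃ b : Fin k → N, (∀ i, b i ∈ X i) ∧ (List.ofFn b : Multiset N) = m := by
  constructor
  · rintro ⟨a, σ, ha, rfl⟩
    refine ⟨a ∘ σ.symm, fun i => by simpa using ha (σ.symm i), ?_⟩
    exact Multiset.coe_eq_coe.mpr (Equiv.Perm.ofFn_comp_perm σ.symm a)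
  · rintro ⟨b, hb, rfl⟩
    exact ⟨b, 1, hb, rfl⟩

/-- Hall's marriage theorem, read on the multiset of a section. -/
theorem mem_Sec_iff_card_le_countP (X : Fin k → Set N) (m : Multiset N) :
    m ∈ Sec X ↔ Multiset.card m = k ∧
      ∀ s : Finset (Fin k), #s ≤ m.countP (· ∈ ⋃ i ∈ s, X i) := by
  constructor
  · intro hm
    obtain ⟨b, hb, rfl⟩ := (mem_Sec_iff X m).mp hm
    refine ⟨by simp, fun s => ?_⟩
    rw [Multiset.countP_coe_ofFn]
    exact card_le_card fun i hi => by simpa using Set.mem_biUnion hi (hb i)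
  · rintro ⟨hcard, hall⟩
    obtain ⟨g, rfl⟩ := m.exists_coe_ofFn_eq hcard
    let t : Fin k → Finset (Fin k) := fun i => {p | g p ∈ X i}
    have ht : ∀ s : Finset (Fin k), #s ≤ #(s.biUnion t) := fun s => by
      convert hall s using 1
      rw [Multiset.countP_coe_ofFn]
      congr 1
      ext p
      simp [t]
    obtain ⟨f, hf, hft⟩ := (all_card_le_biUnion_card_iff_exists_injective t).mp ht
    let σ : Equiv.Perm (Fin k) := Equiv.ofBijective f (Finite.injective_iff_bijective.mp hf)
    refine (mem_Sec_iff X _).mpr ⟨g ∘ σ, fun i => (by simpa [t] using hft i : g (f i) ∈ X i), ?_⟩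
    exact Multiset.coe_eq_coe.mpr (Equiv.Perm.ofFn_comp_perm σ g)

lemma subset_biUnion_of_countP_lt {n : ℕ} {X : Fin (n + 1) → Set N} {m : Multiset N}
    (h : ∀ a ∈ X 0, a ::ₘ m ∈ Sec X) {s : Finset (Fin n)}
    (hs : m.countP (· ∈ ⋃ j ∈ s, X j.succ) < #s) : X 0 ⊆ ⋃ j ∈ s, X j.succ := by
  intro a ha
  have := ((mem_Sec_iff_card_le_countP X _).mp (h a ha)).2 (s.image Fin.succ)
  rw [set_biUnion_finset_image, card_image_of_injective _ (Fin.succ_injective n),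
    Multiset.countP_cons] at this
  by_contra ha'
  simp only [ha', if_false] at this
  omega

end

theorem stmt2_general {N : Type*} {n : ℕ} (X : Fin (n + 1) → Set N)
    (hX : ∀ i, (X i).Nonempty) (m : Multiset N) :
    (∀ a ∈ X 0, (a ::ₘ m) ∈ Sec X) ↔ m ∈ Sec (fun i : Fin n => X i.succ) := by
  constructor
  · intro h
    obtain ⟨a₀, ha₀⟩ := hX 0
    have hall₀ := (mem_Sec_iff_card_le_countP X _).mp (h a₀ ha₀)
    refine (mem_Sec_iff_card_le_countP _ m).mpr ⟨by simpa using hall₀.1, fun s => ?_⟩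
    by_contra! hs
    have hsucc := hall₀.2 (insert 0 (s.image Fin.succ))
    rw [set_biUnion_insert, set_biUnion_finset_image,
      Set.union_eq_self_of_subset_left (subset_biUnion_of_countP_lt h hs),
      card_insert_of_notMem (by simp [Fin.succ_ne_zero]),
      card_image_of_injective _ (Fin.succ_injective n), Multiset.countP_cons] at hsucc
    split_ifs at hsucc <;> omega
  · intro hm a ha
    obtain ⟨c, hc, rfl⟩ := (mem_Sec_iff _ m).mp hm
    exact (mem_Sec_iff X _).mpr ⟨Fin.cons a c, Fin.cases ha hc, by simp [List.ofFn_succ]⟩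

theorem stmt2 {N : Type*} {n : ℕ} (X : Fin (n + 1) → Set N)
    (hX : ∀ i, (X i).Nonempty) (m : Multiset N) (hm : Multiset.card m = n) :
    (∀ a ∈ X 0, (a ::ₘ m) ∈ Sec X) ↔ m ∈ Sec (fun i : Fin n => X i.succ) :=
  stmt2_general X hX m
end

section
/- For n-tuples X, Y of nonempty subsets of N: Sec(X) = Sec(Y) if and only if there exists a permutation σ ∈ S_n with X_{σ(i)} = Y_i for all i. -/
open scoped Classical

/-! For a set `T`, a section of `X` can have at most one entry outside `T` for each index `i`
with `X i ⊄ T`, and, the `X i` being nonempty, choosing `a i ∈ X i \ T` whenever possible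
attains this bound. So `Sec X` determines, for every `T`, how many of the `X i` are contained
in `T`. These down-set counts determine a finite multiset in any partial order: at a minimal
element where two multisets have different multiplicities, they agree strictly below it, so
their counts below that element differ. -/

open Finset

namespace Multiset

theorem countP_le_eq_card_filter_lt_add_count {α : Type*} [PartialOrder α] (s : Multiset α)
    (a : α) : s.countP (· ≤ a) = (s.filter (· < a)).card + s.count a := by
  induction s using Multiset.induction_on with
  | empty => simp
  | cons b s ih =>
    rcases eq_or_ne b a with rfl | hba
    · simp [ih, add_assoc]
    · by_cases hle : b ≤ a <;>
        simp [ih, hba, hba.symm, hle, lt_iff_le_and_ne, add_right_comm]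

theorem eq_of_forall_countP_le_eq {α : Type*} [PartialOrder α] {s t : Multiset α}
    (h : ∀ a, s.countP (· ≤ a) = t.countP (· ≤ a)) : s = t := by
  by_contra hst
  have hfin : {a | s.count a ≠ t.count a}.Finite := by
    refine (s + t).toFinset.finite_toSet.subset fun a ha => ?_
    by_contra hmem
    simp_all
  obtain ⟨a, ha⟩ := hfin.exists_minimal (by simpa [Set.Nonempty, Multiset.ext] using hst)
  have hbelow : s.filter (· < a) = t.filter (· < a) := by
    ext b
    simp only [count_filter]
    split_ifs with hba
    · by_contra hb
      exact ha.not_lt hb hba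
    · rfl
  apply ha.prop
  have := h a
  rw [countP_le_eq_card_filter_lt_add_count, countP_le_eq_card_filter_lt_add_count, hbelow] at this
  omega

theorem countP_ofFn {α : Type*} {n : ℕ} (f : Fin n → α) (p : α → Prop) [DecidablePred p] :
    (List.ofFn f : Multiset α).countP p = #{i | p (f i)} := by
  rw [show (List.ofFn f : Multiset α) = univ.val.map f by simp [List.ofFn_eq_map], countP_map]
  rfl

end Multiset

theorem exists_perm_of_coe_ofFn_eq {α : Type*} {n : ℕ} {f g : Fin n → α}
    (h : (List.ofFn f : Multiset α) = List.ofFn g) :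
    ∃ σ : Equiv.Perm (Fin n), ∀ i, f (σ i) = g i := by
  have hfiber : ∀ c, Fintype.card {i // g i = c} = Fintype.card {i // f i = c} := by
    intro c
    have := congrArg (Multiset.countP (· = c)) h.symm
    rwa [Multiset.countP_ofFn, Multiset.countP_ofFn, ← Fintype.card_subtype,
      ← Fintype.card_subtype] at this
  exact ⟨Equiv.ofFiberEquiv fun c => Fintype.equivOfCardEq (hfiber c),
    Equiv.ofFiberEquiv_map _⟩

section Sections

variable {N : Type*} {n : ℕ}

theorem sec_comp_perm (X : Fin n → Set N) (σ : Equiv.Perm (Fin n)) : Sec (X ∘ σ) = Sec X := by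
  ext m
  constructor
  · rintro ⟨a, τ, ha, rfl⟩
    exact ⟨a, τ.trans σ, ha, rfl⟩
  · rintro ⟨a, τ, ha, rfl⟩
    exact ⟨a, τ.trans σ.symm, fun i => by simpa using ha i, rfl⟩

theorem countP_notMem_le_of_mem_sec {X : Fin n → Set N} {m : Multiset N} (hm : m ∈ Sec X)
    (T : Set N) : m.countP (· ∉ T) ≤ (List.ofFn X : Multiset (Set N)).countP (¬ · ⊆ T) := by
  obtain ⟨a, σ, ha, rfl⟩ := hm
  rw [Multiset.countP_ofFn, Multiset.countP_ofFn]
  calc #{i | a i ∉ T} ≤ #{i | ¬ X (σ i) ⊆ T} :=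
        card_le_card fun i => by simpa using fun hi hsub => hi (hsub (ha i))
    _ = #{i | ¬ X i ⊆ T} := card_equiv σ (by simp)

theorem exists_mem_sec_countP_notMem_eq {X : Fin n → Set N} (hX : ∀ i, (X i).Nonempty)
    (T : Set N) :
    ∃ m ∈ Sec X, m.countP (· ∉ T) = (List.ofFn X : Multiset (Set N)).countP (¬ · ⊆ T) := by
  have hpick : ∀ i, ∃ x ∈ X i, (x ∉ T ↔ ¬ X i ⊆ T) := by
    intro i
    by_cases hsub : X i ⊆ T
    · obtain ⟨x, hx⟩ := hX i
      exact ⟨x, hx, by simpa [hsub] using hsub hx⟩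
    · obtain ⟨x, hx, hxT⟩ := Set.not_subset.mp hsub
      exact ⟨x, hx, by simp [hxT, hsub]⟩
  choose a haX haT using hpick
  refine ⟨List.ofFn a, ⟨a, 1, haX, rfl⟩, ?_⟩
  rw [Multiset.countP_ofFn, Multiset.countP_ofFn]
  exact congrArg card (filter_congr fun i _ => haT i)

theorem coe_ofFn_eq_of_sec_eq {X Y : Fin n → Set N} (hX : ∀ i, (X i).Nonempty)
    (hY : ∀ i, (Y i).Nonempty) (h : Sec X = Sec Y) :
    (List.ofFn X : Multiset (Set N)) = List.ofFn Y := by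
  have hnot : ∀ T : Set N, (List.ofFn X : Multiset (Set N)).countP (¬ · ⊆ T)
      = (List.ofFn Y : Multiset (Set N)).countP (¬ · ⊆ T) := by
    intro T
    obtain ⟨mX, hmX, hmaxX⟩ := exists_mem_sec_countP_notMem_eq hX T
    obtain ⟨mY, hmY, hmaxY⟩ := exists_mem_sec_countP_notMem_eq hY T
    exact le_antisymm (hmaxX ▸ countP_notMem_le_of_mem_sec (h ▸ hmX) T)
      (hmaxY ▸ countP_notMem_le_of_mem_sec (h ▸ hmY) T)
  refine Multiset.eq_of_forall_countP_le_eq fun T => ?_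
  have hcardX := Multiset.card_eq_countP_add_countP (· ⊆ T) (List.ofFn X : Multiset (Set N))
  have hcardY := Multiset.card_eq_countP_add_countP (· ⊆ T) (List.ofFn Y : Multiset (Set N))
  simp only [Multiset.coe_card, List.length_ofFn] at hcardX hcardY
  have := hnot T
  change _ = Multiset.countP (· ⊆ T) _
  omega

end Sections

theorem stmt3 {N : Type*} {n : ℕ} (X Y : Fin n → Set N)
    (hX : ∀ i, (X i).Nonempty) (hY : ∀ i, (Y i).Nonempty) :
    Sec X = Sec Y ↔ ∃ σ : Equiv.Perm (Fin n), ∀ i, X (σ i) = Y i := by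
  constructor
  · intro h
    exact exists_perm_of_coe_ofFn_eq (coe_ofFn_eq_of_sec_eq hX hY h)
  · rintro ⟨σ, hσ⟩
    rw [← sec_comp_perm X σ]
    exact congrArg Sec (funext hσ)
end

section
/- If (Z, X_2, …, X_n) and (Z, Y_2, …, Y_n) are n-tuples of nonempty subsets of N with the same set of unordered sections, then (X_2,…,X_n) and (Y_2,…,Y_n) have the same set of unordered sections. -/
open scoped Classical

/-!
A multiset `[a₁, …, aₙ]` lies in `Sec X` iff the entries can be matched bijectively to the
positions of `X`, which by Hall's theorem means every set `s` of entries has at least `|s|`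
admissible positions. Let `a` be matched into `X` and suppose Hall's condition for `a` against `Y`
fails on `s`. For `z ∈ Z`, the section `z :: a` of `(Z, X)` is matched into `(Z, Y)`, and this
forces some `aᵢ` with `i ∈ s` into `Z`. Then `aᵢ :: a` is a section of `(Z, X)` as well, but its
`|s| + 1` entries `aᵢ, (aⱼ)_{j ∈ s}` have at most `|N(s)| + 1 < |s| + 1` admissible positions
in `(Z, Y)`.
-/

section

open Finset

theorem exists_perm_apply_eq_of_ofFn_eq {α : Type*} {n : ℕ} {a b : Fin n → α}
    (h : (List.ofFn a : Multiset α) = List.ofFn b) :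
    ∃ π : Equiv.Perm (Fin n), ∀ i, b (π i) = a i := by
  have hfiber (c : α) : Fintype.card {i // a i = c} = Fintype.card {i // b i = c} := by
    have := congrArg (Multiset.count c) h
    simp only [← Fin.univ_val_map, Multiset.count_map] at this
    simpa [Fintype.card_subtype, Finset.card, Finset.filter_val, eq_comm] using this
  exact ⟨Equiv.ofFiberEquiv fun c => Fintype.equivOfCardEq (hfiber c), Equiv.ofFiberEquiv_map _⟩

variable {N : Type*}

theorem ofFn_mem_Sec_iff {n : ℕ} {X : Fin n → Set N} {a : Fin n → N} :
    (List.ofFn a : Multiset N) ∈ Sec X ↔ ∃ τ : Equiv.Perm (Fin n), ∀ i, a i ∈ X (τ i) := by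
  constructor
  · rintro ⟨b, σ, hb, hab⟩
    obtain ⟨π, hπ⟩ := exists_perm_apply_eq_of_ofFn_eq hab
    exact ⟨π.trans σ, fun i => hπ i ▸ hb (π i)⟩
  · rintro ⟨τ, hτ⟩
    exact ⟨a, τ, hτ, rfl⟩

theorem cons_mem_Sec_cons {n : ℕ} {Z : Set N} {X : Fin n → Set N} {x : N} {a : Fin n → N}
    (hx : x ∈ Z) (ha : (List.ofFn a : Multiset N) ∈ Sec X) :
    (List.ofFn (Fin.cons x a : Fin (n + 1) → N) : Multiset N) ∈ Sec (Fin.cons Z X) := by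
  obtain ⟨τ, hτ⟩ := ofFn_mem_Sec_iff.mp ha
  refine ofFn_mem_Sec_iff.mpr ⟨Equiv.Perm.decomposeFin.symm (0, τ), Fin.cases ?_ fun i => ?_⟩
  · simpa using hx
  · simpa using hτ i

noncomputable def hallNeighbors {k m : ℕ} (W : Fin m → Set N) (a : Fin k → N) (s : Finset (Fin k)) :
    Finset (Fin m) :=
  s.biUnion fun i => univ.filter fun j => a i ∈ W j

theorem exists_perm_iff_card_le_card_hallNeighbors {n : ℕ} (W : Fin n → Set N) (a : Fin n → N) :
    (∃ τ : Equiv.Perm (Fin n), ∀ i, a i ∈ W (τ i)) ↔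
      ∀ s, #s ≤ #(hallNeighbors W a s) := by
  simp only [hallNeighbors]
  rw [Finset.all_card_le_biUnion_card_iff_exists_injective]
  simp only [mem_filter, mem_univ, true_and]
  constructor
  · rintro ⟨τ, hτ⟩
    exact ⟨τ, τ.injective, hτ⟩
  · rintro ⟨f, hf, hfa⟩
    exact ⟨Equiv.ofBijective f (Finite.injective_iff_bijective.mp hf), hfa⟩

theorem hallNeighbors_cons_subset {k n : ℕ} (Z : Set N) (Y : Fin n → Set N) (b : Fin k → N)
    (t : Finset (Fin k)) :
    hallNeighbors (Fin.cons Z Y) b t ⊆ insert 0 ((hallNeighbors Y b t).map (Fin.succEmb n)) := by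
  intro j hj
  cases j using Fin.cases with
  | zero => exact mem_insert_self _ _
  | succ j => simpa [hallNeighbors] using hj

theorem card_hallNeighbors_cons_le {k n : ℕ} (Z : Set N) (Y : Fin n → Set N) (b : Fin k → N)
    (t : Finset (Fin k)) :
    #(hallNeighbors (Fin.cons Z Y) b t) ≤ #(hallNeighbors Y b t) + 1 :=
  (card_le_card (hallNeighbors_cons_subset Z Y b t)).trans <| (card_insert_le _ _).trans_eq <| by
    rw [card_map]

theorem card_hallNeighbors_cons_le_of_forall_notMem {k n : ℕ} {Z : Set N} (Y : Fin n → Set N)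
    {b : Fin k → N} {t : Finset (Fin k)} (hZ : ∀ i ∈ t, b i ∉ Z) :
    #(hallNeighbors (Fin.cons Z Y) b t) ≤ #(hallNeighbors Y b t) := by
  have h0 : 0 ∉ hallNeighbors (Fin.cons Z Y) b t := by simpa [hallNeighbors] using hZ
  calc #(hallNeighbors (Fin.cons Z Y) b t)
      ≤ #((hallNeighbors Y b t).map (Fin.succEmb n)) :=
        card_le_card fun j hj => (mem_insert.mp (hallNeighbors_cons_subset Z Y b t hj)).resolve_left
          (by rintro rfl; exact h0 hj)
    _ = #(hallNeighbors Y b t) := card_map _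

theorem hallNeighbors_cons_map_succ {k m : ℕ} (W : Fin m → Set N) (x : N) (a : Fin k → N)
    (s : Finset (Fin k)) :
    hallNeighbors W (Fin.cons x a) (s.map (Fin.succEmb k)) = hallNeighbors W a s := by
  simp [hallNeighbors, map_eq_image, image_biUnion]

theorem hallNeighbors_cons_insert_zero {k m : ℕ} (W : Fin m → Set N) (a : Fin k → N) (i : Fin k)
    (s : Finset (Fin k)) :
    hallNeighbors W (Fin.cons (a i) a) (insert 0 (s.map (Fin.succEmb k))) =
      hallNeighbors W a (insert i s) := by
  simp [hallNeighbors, map_eq_image, image_biUnion]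

theorem Sec_subset_of_Sec_cons_subset {n : ℕ} {Z : Set N} {X Y : Fin n → Set N}
    (hZ : Z.Nonempty) (h : Sec (Fin.cons Z X) ⊆ Sec (Fin.cons Z Y)) : Sec X ⊆ Sec Y := by
  rintro _ ⟨a, σ, haX, rfl⟩
  have hall_cons : ∀ x ∈ Z, ∀ t : Finset (Fin (n + 1)),
      #t ≤ #(hallNeighbors (Fin.cons Z Y) (Fin.cons x a) t) := fun x hx =>
    (exists_perm_iff_card_le_card_hallNeighbors _ _).mp <|
      ofFn_mem_Sec_iff.mp (h (cons_mem_Sec_cons hx ⟨a, σ, haX, rfl⟩))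
  refine ofFn_mem_Sec_iff.mpr <| (exists_perm_iff_card_le_card_hallNeighbors Y a).mpr ?_
  by_contra! ⟨s, hs⟩
  obtain ⟨z, hz⟩ := hZ
  obtain ⟨i, his, hiZ⟩ : ∃ i ∈ s, a i ∈ Z := by
    by_contra! hsZ
    have := calc #s = #(s.map (Fin.succEmb n)) := (card_map _).symm
      _ ≤ #(hallNeighbors (Fin.cons Z Y) (Fin.cons z a) (s.map (Fin.succEmb n))) := hall_cons z hz _
      _ ≤ #(hallNeighbors Y (Fin.cons z a) (s.map (Fin.succEmb n))) :=
        card_hallNeighbors_cons_le_of_forall_notMem Y (by simpa using hsZ)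
      _ = #(hallNeighbors Y a s) := by rw [hallNeighbors_cons_map_succ]
    omega
  have hcard : #(insert 0 (s.map (Fin.succEmb n))) = #s + 1 := by
    rw [card_insert_of_notMem (by simp), card_map]
  have := calc #s + 1 = #(insert 0 (s.map (Fin.succEmb n))) := hcard.symm
    _ ≤ #(hallNeighbors (Fin.cons Z Y) (Fin.cons (a i) a) (insert 0 (s.map (Fin.succEmb n)))) :=
      hall_cons _ hiZ _
    _ ≤ #(hallNeighbors Y (Fin.cons (a i) a) (insert 0 (s.map (Fin.succEmb n)))) + 1 :=
      card_hallNeighbors_cons_le Z Y _ _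
    _ = #(hallNeighbors Y a s) + 1 := by rw [hallNeighbors_cons_insert_zero, insert_eq_of_mem his]
  omega

end

theorem stmt4_general {N : Type*} {n : ℕ} (Z : Set N) (X Y : Fin n → Set N)
    (hZ : Z.Nonempty)
    (h : Sec (Fin.cons Z X) = Sec (Fin.cons Z Y)) :
    Sec X = Sec Y :=
  (Sec_subset_of_Sec_cons_subset hZ h.le).antisymm (Sec_subset_of_Sec_cons_subset hZ h.ge)

theorem stmt4 {N : Type*} {n : ℕ} (Z : Set N) (X Y : Fin n → Set N)
    (hZ : Z.Nonempty) (hX : ∀ i, (X i).Nonempty) (hY : ∀ i, (Y i).Nonempty)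
    (h : Sec (Fin.cons Z X) = Sec (Fin.cons Z Y)) :
    Sec X = Sec Y :=
  stmt4_general Z X Y hZ h
end

section
/- Let X, Y be n-tuples of nonempty subsets of N satisfying: (1) a ↦ χ_Y(a) is a bijection from N to B^n ∖ {0…0}; (2) the induced function f sending χ_Y(a) to χ_X(a) is increasing. Then Sec(X) ⊆ Sec(Y) if and only if |χ_X(a)| ≤ |χ_Y(a)| for all a ∈ N. -/
open scoped Classical

/-!
If `Sec X ⊆ Sec Y`, take a section of `X` that uses `a` in every coordinate where it may; `a`
then occurs at least `|χ_X(a)|` times, while in a section of `Y` it occurs at most `|χ_Y(a)|`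
times.

Conversely, a section `c` of `X` (with `c i ∈ X (σ i)`) is a section of `Y` by Hall's theorem
once, for every set `s` of indices, the values `c i` with `i ∈ s` together lie in at least `|s|`
of the sets `Y j`. Those `j` form a nonempty support `T`, which is `χ_Y(b)` for some `b`. Every
`χ_Y(c i)` lies below it, so by monotonicity every `σ i` with `i ∈ s` lies in the support of
`χ_X(b)`, whence `|s| ≤ |χ_X(b)| ≤ |χ_Y(b)| = |T|`.
-/

open Finset

section

variable {N : Type*} {n : ℕ}

lemma wt_chi (Z : Fin n → Set N) (a : N) : wt (chi Z a) = #{i | a ∈ Z i} := by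
  simp [wt, chi]

lemma wt_decide_mem (T : Finset (Fin n)) : wt (fun j => decide (j ∈ T)) = #T := by
  simp [wt]

lemma count_ofFn (c : Fin n → N) (a : N) :
    Multiset.count a (List.ofFn c : Multiset N) = #{i | c i = a} := by
  rw [List.ofFn_eq_map, ← Multiset.map_coe, Multiset.count_map, Finset.card, Finset.filter_val,
    Fin.univ_def]
  exact congrArg _ (Multiset.filter_congr fun _ _ => eq_comm)

lemma count_le_wt_chi_of_mem_Sec {Y : Fin n → Set N} {m : Multiset N} (hm : m ∈ Sec Y)
    (a : N) : m.count a ≤ wt (chi Y a) := by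
  obtain ⟨d, τ, hd, rfl⟩ := hm
  rw [count_ofFn, wt_chi]
  refine card_le_card_of_injOn τ (fun i hi => ?_) τ.injective.injOn
  simp only [coe_filter, Set.mem_ofPred_eq, mem_univ, true_and] at hi ⊢
  exact hi ▸ hd i

lemma exists_mem_Sec_wt_chi_le_count {X : Fin n → Set N} (hX : ∀ i, (X i).Nonempty) (a : N) :
    ∃ m ∈ Sec X, wt (chi X a) ≤ m.count a := by
  let c i := if a ∈ X i then a else (hX i).some
  refine ⟨List.ofFn c, ⟨c, Equiv.refl _, fun i => ?_, rfl⟩, ?_⟩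
  · by_cases h : a ∈ X i <;> simp [c, h, (hX i).some_mem]
  · rw [count_ofFn, wt_chi]
    exact card_le_card fun i hi => by simp_all [c]

lemma wt_chi_le_of_Sec_subset {X Y : Fin n → Set N} (hX : ∀ i, (X i).Nonempty)
    (hXY : Sec X ⊆ Sec Y) (a : N) : wt (chi X a) ≤ wt (chi Y a) := by
  obtain ⟨m, hm, ha⟩ := exists_mem_Sec_wt_chi_le_count hX a
  exact ha.trans (count_le_wt_chi_of_mem_Sec (hXY hm) a)

lemma card_le_wt_of_forall_chi_le {X : Fin n → Set N} {c : Fin n → N} {σ : Equiv.Perm (Fin n)}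
    (hc : ∀ i, c i ∈ X (σ i)) {s : Finset (Fin n)} {v : Fin n → Bool}
    (hv : ∀ i ∈ s, chi X (c i) ≤ v) : #s ≤ wt v := by
  refine card_le_card_of_injOn σ (fun i hi => ?_) σ.injective.injOn
  simpa [chi, hc i, Bool.le_iff_imp] using hv i hi (σ i)

lemma card_le_card_biUnion_of_wt_chi_le {X Y : Fin n → Set N}
    (hsurj : ∀ u : Fin n → Bool, u ≠ (fun _ => false) → ∃ a : N, chi Y a = u)
    (hne : ∀ a : N, chi Y a ≠ (fun _ => false))
    (hmono : ∀ a b : N, chi Y a ≤ chi Y b → chi X a ≤ chi X b)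
    (hw : ∀ a : N, wt (chi X a) ≤ wt (chi Y a))
    {c : Fin n → N} {σ : Equiv.Perm (Fin n)} (hc : ∀ i, c i ∈ X (σ i)) (s : Finset (Fin n)) :
    #s ≤ #(s.biUnion fun i => {j | c i ∈ Y j}) := by
  rcases s.eq_empty_or_nonempty with rfl | ⟨i₀, hi₀⟩
  · simp
  set T := s.biUnion fun i => {j | c i ∈ Y j}
  have hle : ∀ i ∈ s, chi Y (c i) ≤ fun j => decide (j ∈ T) := fun i hi j => by
    simpa [chi, T, Bool.le_iff_imp] using fun hj => ⟨i, hi, hj⟩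
  have hT : (fun j => decide (j ∈ T)) ≠ fun _ => false := fun h => by
    have h₀ := hle i₀ hi₀
    rw [h] at h₀
    exact hne (c i₀) (le_bot_iff.mp h₀)
  obtain ⟨b, hb⟩ := hsurj _ hT
  calc #s ≤ wt (chi X b) :=
        card_le_wt_of_forall_chi_le hc fun i hi => hmono _ _ (hb ▸ hle i hi)
    _ ≤ wt (chi Y b) := hw b
    _ = #T := by rw [hb, wt_decide_mem]

lemma ofFn_mem_Sec_of_forall_card_le {Y : Fin n → Set N} (c : Fin n → N)
    (hall : ∀ s : Finset (Fin n), #s ≤ #(s.biUnion fun i => {j | c i ∈ Y j})) :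
    (List.ofFn c : Multiset N) ∈ Sec Y := by
  obtain ⟨f, hf, hfY⟩ := (all_card_le_biUnion_card_iff_exists_injective _).mp hall
  exact ⟨c, .ofBijective f (Finite.injective_iff_bijective.mp hf), fun i => by simpa using hfY i,
    rfl⟩

end

theorem stmt6_general {N : Type*} {n : ℕ} (X Y : Fin n → Set N)
    (hX : ∀ i, (X i).Nonempty)
    (h1surj : ∀ u : Fin n → Bool, u ≠ (fun _ => false) → ∃ a : N, chi Y a = u)
    (h1ne : ∀ a : N, chi Y a ≠ (fun _ => false))
    (h2 : ∀ a b : N, chi Y a ≤ chi Y b → chi X a ≤ chi X b) :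
    Sec X ⊆ Sec Y ↔ ∀ a : N, wt (chi X a) ≤ wt (chi Y a) := by
  refine ⟨wt_chi_le_of_Sec_subset hX, ?_⟩
  rintro hw _ ⟨c, σ, hc, rfl⟩
  exact ofFn_mem_Sec_of_forall_card_le c (card_le_card_biUnion_of_wt_chi_le h1surj h1ne h2 hw hc)

theorem stmt6 {N : Type*} {n : ℕ} (X Y : Fin n → Set N)
    (hX : ∀ i, (X i).Nonempty) (hY : ∀ i, (Y i).Nonempty)
    (h1inj : Function.Injective (chi Y))
    (h1surj : ∀ u : Fin n → Bool, u ≠ (fun _ => false) → ∃ a : N, chi Y a = u)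
    (h1ne : ∀ a : N, chi Y a ≠ (fun _ => false))
    (h2 : ∀ a b : N, chi Y a ≤ chi Y b → chi X a ≤ chi X b) :
    Sec X ⊆ Sec Y ↔ ∀ a : N, wt (chi X a) ≤ wt (chi Y a) :=
  stmt6_general X Y hX h1surj h1ne h2
end

section
/- A function f : B^n → B^n is strictly increasing (u < v implies f(u) < f(v)) if and only if f is increasing (monotone) and |f(u)| = |u| for all u ∈ B^n. -/
open scoped Classical

/-!
Identify `B^n` with `Finset (Fin n)`, so that `|u|` becomes the cardinality. Along a chain
`∅ ⊂ {a₁} ⊂ {a₁, a₂} ⊂ ⋯` a strictly monotone map raises cardinality at each step, hence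
`#s ≤ #(f s)`. Conjugating `f` by complementation gives another strictly monotone map, and the same
bound for it reads `#(f s) ≤ #s`. Conversely, a monotone map preserving `|·|` cannot send `u < v` to
equal values, since `|u| < |v|`.
-/

open Finset

namespace Finset

variable {α β : Type*}

theorem card_le_card_apply_of_strictMono [DecidableEq α] {f : Finset α → Finset β}
    (hf : StrictMono f) (s : Finset α) : #s ≤ #(f s) := by
  induction s using Finset.induction_on with
  | empty => exact Nat.zero_le _
  | insert a s ha ih =>
    calc #(insert a s) = #s + 1 := card_insert_of_notMem ha
      _ ≤ #(f s) + 1 := by omega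
      _ ≤ #(f (insert a s)) := card_lt_card (hf (ssubset_insert ha))

theorem card_apply_of_strictMono [Fintype α] [DecidableEq α] {f : Finset α → Finset α}
    (hf : StrictMono f) (s : Finset α) : #(f s) = #s := by
  have hcompl : StrictMono fun t => (f tᶜ)ᶜ :=
    (compl_strictAnti _).comp (hf.comp_strictAnti (compl_strictAnti _))
  have hle := card_le_card_apply_of_strictMono hf s
  have hge := card_le_card_apply_of_strictMono hcompl sᶜ
  rw [compl_compl, card_compl, card_compl] at hge
  have := card_le_univ (f s)
  omega

end Finset

def boolFunOrderIsoFinset (α : Type*) [Fintype α] [DecidableEq α] : (α → Bool) ≃o Finset α where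
  toFun u := univ.filter fun i => u i = true
  invFun s i := decide (i ∈ s)
  left_inv u := by funext i; simp
  right_inv s := by ext; simp
  map_rel_iff' := by simp [subset_iff, Pi.le_def, Bool.le_iff_imp]

theorem wt_strictMono {n : ℕ} : StrictMono (wt : (Fin n → Bool) → ℕ) :=
  card_strictMono.comp (boolFunOrderIsoFinset (Fin n)).strictMono

theorem stmt10 {n : ℕ} (f : (Fin n → Bool) → (Fin n → Bool)) :
    StrictMono f ↔ (Monotone f ∧ ∀ u, wt (f u) = wt u) := by
  set e := boolFunOrderIsoFinset (Fin n)
  constructor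
  · intro hf
    have hconj : StrictMono (e ∘ f ∘ e.symm) :=
      e.strictMono.comp (hf.comp e.symm.strictMono)
    refine ⟨hf.monotone, fun u => ?_⟩
    have := card_apply_of_strictMono hconj (e u)
    rwa [Function.comp_apply, Function.comp_apply, e.symm_apply_apply] at this
  · rintro ⟨hmono, hwt⟩ u v huv
    refine (hmono huv.le).lt_of_ne fun heq => ?_
    exact (wt_strictMono huv).ne (by rw [← hwt u, ← hwt v, heq])
end
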